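/- arXiv:1010.2668 — 4 statements merged into one kernel-verified Lean document; each statement's English description precedes it below -/
import Mathlib

section
/- In the long-range setup, for every C¹ path γ:[0,1]→ℝⁿ whose image avoids the centres R_1,…,R_K, the Agmon lengths of γ with respect to the full potential U and with respect to the truncated potential U_sh differ by at most √(2·m·K·λ) times the Euclidean length of γ: |L_A^{U}(γ) − L_A^{U_sh}(γ)| ≤ √(2mKλ)·∫₀¹ ‖γ'(t)‖ dt. (This is the quantitative core of the statement that leading tunnelling trajectories for long-range multi-centre potentials are linear up to a term of order O(λ) as λ→0.) -/
/-! Outside its cut-off ball the truncation drops the term `𝒱_j(‖x − R_j‖)`, which lies in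
`[𝒱_j(Δ_j), 0)` by monotonicity, so `|U − U_sh| ≤ Kλ` along the path. Since
`|√a − √b| ≤ √|a − b|` and `x ↦ max (x − E) 0` is `1`-Lipschitz, the two Agmon integrands differ
by at most `√(Kλ) ‖γ'‖`. The integrals are genuine: each `𝒱_j` is merely monotone, so
`t ↦ 𝒱_j ‖γ t − R_j‖` is measurable because the path avoids the centres, and as the radial terms
are nonpositive, both integrands are dominated by the continuous one built from `F x_n`. -/

open MeasureTheory Filter

noncomputable def agmonLength {n : ℕ} (m E : ℝ) (W : EuclideanSpace ℝ (Fin n) → ℝ)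
    (γ : ℝ → EuclideanSpace ℝ (Fin n)) : ℝ :=
  Real.sqrt (2 * m) * ∫ t in (0:ℝ)..1, Real.sqrt (max (W (γ t) - E) 0) * ‖deriv γ t‖

open Set

namespace Real

theorem sqrt_le_sqrt_add_sqrt_sub {a b : ℝ} (h : b ≤ a) : √a ≤ √b + √(a - b) := by
  rw [sqrt_le_iff]
  refine ⟨by positivity, ?_⟩
  nlinarith [sq_sqrt' (x := b), sq_sqrt (sub_nonneg.2 h), le_max_left b 0,
    mul_nonneg (sqrt_nonneg b) (sqrt_nonneg (a - b))]

theorem abs_sqrt_sub_sqrt_le (a b : ℝ) : |√a - √b| ≤ √|a - b| := by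
  wlog h : b ≤ a generalizing a b
  · rw [abs_sub_comm, abs_sub_comm a]
    exact this b a (le_of_not_ge h)
  rw [abs_of_nonneg (sub_nonneg.2 (sqrt_le_sqrt h)), abs_of_nonneg (sub_nonneg.2 h)]
  linarith [sqrt_le_sqrt_add_sqrt_sub h]

end Real

theorem MonotoneOn.aemeasurable_comp {α β δ : Type*} [MeasurableSpace α]
    [TopologicalSpace β] [MeasurableSpace β] [BorelSpace β] [LinearOrder β] [OrderClosedTopology β]
    [TopologicalSpace δ] [MeasurableSpace δ] [BorelSpace δ] [LinearOrder δ] [OrderTopology δ]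
    [SecondCountableTopology δ] {μ : Measure α} {f : β → δ} {s : Set β} {g : α → β}
    (hf : MonotoneOn f s) (hs : MeasurableSet s) (hg : Measurable g) (hgs : ∀ᵐ x ∂μ, g x ∈ s) :
    AEMeasurable (f ∘ g) μ := by
  have hmap : (μ.map g).restrict s = μ.map g :=
    Measure.restrict_eq_self_of_ae_mem ((ae_map_iff hg.aemeasurable hs).2 hgs)
  exact (hmap ▸ aemeasurable_restrict_of_monotoneOn hs hf).comp_aemeasurable hg.aemeasurable

theorem aemeasurable_sum_comp_norm_sub {ι X : Type*} [Fintype ι] [NormedAddCommGroup X]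
    {μ : Measure ℝ} {V : ι → ℝ → ℝ} {R : ι → X} {γ : ℝ → X} {s : Set ℝ}
    (hV : ∀ j, MonotoneOn (V j) (Ioi 0)) (hγ : Continuous γ) (hs : MeasurableSet s)
    (havoid : ∀ t ∈ s, ∀ j, 0 < ‖γ t - R j‖) :
    AEMeasurable (fun t => ∑ j, V j ‖γ t - R j‖) (μ.restrict s) :=
  Finset.aemeasurable_fun_sum _ fun j _ => (hV j).aemeasurable_comp measurableSet_Ioi
    (by fun_prop : Continuous fun t => ‖γ t - R j‖).measurable
    (ae_restrict_of_forall_mem hs fun t ht => havoid t ht j)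

/-- The short-range part `V_sh` of a radial potential `V` with cut-off radius `Δ`. -/
noncomputable def truncate (V : ℝ → ℝ) (Δ s : ℝ) : ℝ := if s < Δ then V s else 0

section Truncate

variable {V : ℝ → ℝ} {Δ : ℝ}

theorem truncate_nonpos (hV0 : ∀ s, 0 < s → V s ≤ 0) {s : ℝ} (hs : 0 < s) :
    truncate V Δ s ≤ 0 := by
  unfold truncate
  split_ifs
  exacts [hV0 s hs, le_rfl]

theorem monotoneOn_truncate (hV : MonotoneOn V (Ioi 0)) (hV0 : ∀ s, 0 < s → V s ≤ 0) :
    MonotoneOn (truncate V Δ) (Ioi 0) := by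
  intro a ha b hb hab
  by_cases hbΔ : b < Δ
  · simp only [truncate, hab.trans_lt hbΔ, hbΔ, if_true]
    exact hV ha hb hab
  · calc truncate V Δ a ≤ 0 := truncate_nonpos hV0 ha
      _ = truncate V Δ b := (if_neg hbΔ).symm

theorem abs_sub_truncate_le (hV : MonotoneOn V (Ioi 0)) (hV0 : ∀ s, 0 < s → V s ≤ 0)
    (hΔ : 0 < Δ) {s : ℝ} (hs : 0 < s) : |V s - truncate V Δ s| ≤ |V Δ| := by
  unfold truncate
  split_ifs with hsΔ
  · simp
  · rw [sub_zero, abs_of_nonpos (hV0 s hs), abs_of_nonpos (hV0 Δ hΔ), neg_le_neg_iff]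
    exact hV hΔ hs (not_lt.1 hsΔ)

end Truncate

theorem abs_sum_sub_sum_truncate_le {ι : Type*} [Fintype ι] {V : ι → ℝ → ℝ} {Δ s : ι → ℝ}
    {c : ℝ} (hV : ∀ j, MonotoneOn (V j) (Ioi 0)) (hV0 : ∀ j, ∀ s, 0 < s → V j s ≤ 0)
    (hΔ : ∀ j, 0 < Δ j) (hs : ∀ j, 0 < s j) (hc : ∀ j, |V j (Δ j)| ≤ c) :
    |∑ j, V j (s j) - ∑ j, truncate (V j) (Δ j) (s j)| ≤ Fintype.card ι * c := calc
  _ ≤ ∑ j, |V j (s j) - truncate (V j) (Δ j) (s j)| := by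
    rw [← Finset.sum_sub_distrib]
    exact Finset.abs_sum_le_sum_abs _ _
  _ ≤ ∑ _j : ι, c := Finset.sum_le_sum fun j _ =>
    (abs_sub_truncate_le (hV j) (hV0 j) (hΔ j) (hs j)).trans (hc j)
  _ = Fintype.card ι * c := by simp

section AgmonLength

variable {n : ℕ} {m E : ℝ} {γ : ℝ → EuclideanSpace ℝ (Fin n)}

theorem abs_agmonLength_sub_le {W W' : EuclideanSpace ℝ (Fin n) → ℝ} {c : ℝ}
    (hW : IntervalIntegrable (fun t => √(max (W (γ t) - E) 0) * ‖deriv γ t‖) volume 0 1)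
    (hW' : IntervalIntegrable (fun t => √(max (W' (γ t) - E) 0) * ‖deriv γ t‖) volume 0 1)
    (hγ' : IntervalIntegrable (fun t => ‖deriv γ t‖) volume 0 1)
    (hc : ∀ t ∈ Icc (0:ℝ) 1, |W (γ t) - W' (γ t)| ≤ c) :
    |agmonLength m E W γ - agmonLength m E W' γ| ≤
      √(2 * m * c) * ∫ t in (0:ℝ)..1, ‖deriv γ t‖ := by
  have hc0 : 0 ≤ c := (abs_nonneg _).trans (hc 0 ⟨le_rfl, zero_le_one⟩)
  have hpoint : ∀ t ∈ Icc (0:ℝ) 1,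
      |√(max (W (γ t) - E) 0) - √(max (W' (γ t) - E) 0)| ≤ √c := fun t ht =>
    (Real.abs_sqrt_sub_sqrt_le _ _).trans <| Real.sqrt_le_sqrt <|
      (abs_max_sub_max_le_abs _ _ _).trans <| by rw [sub_sub_sub_cancel_right]; exact hc t ht
  have hint : ‖∫ t in (0:ℝ)..1,
      (√(max (W (γ t) - E) 0) * ‖deriv γ t‖ - √(max (W' (γ t) - E) 0) * ‖deriv γ t‖)‖ ≤
      ∫ t in (0:ℝ)..1, √c * ‖deriv γ t‖ := by
    refine intervalIntegral.norm_integral_le_of_norm_le zero_le_one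
      (ae_of_all _ fun t ht => ?_) (hγ'.const_mul _)
    rw [← sub_mul, norm_mul, norm_norm, Real.norm_eq_abs]
    exact mul_le_mul_of_nonneg_right (hpoint t (Ioc_subset_Icc_self ht)) (norm_nonneg _)
  rw [intervalIntegral.integral_sub hW hW', intervalIntegral.integral_const_mul,
    Real.norm_eq_abs] at hint
  rw [agmonLength, agmonLength, ← mul_sub, abs_mul, abs_of_nonneg (Real.sqrt_nonneg _),
    Real.sqrt_mul' _ hc0, mul_assoc]
  gcongr

theorem ContDiff.intervalIntegrable_agmonIntegrand {W : EuclideanSpace ℝ (Fin n) → ℝ}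
    {φ : ℝ → ℝ} (hγ : ContDiff ℝ 1 γ) (hφ : Continuous φ)
    (hWγ : AEMeasurable (fun t => W (γ t)) (volume.restrict (Ioc (0:ℝ) 1)))
    (hle : ∀ t ∈ Icc (0:ℝ) 1, W (γ t) ≤ φ t) :
    IntervalIntegrable (fun t => √(max (W (γ t) - E) 0) * ‖deriv γ t‖) volume 0 1 := by
  have hγ' : Continuous (deriv γ) := hγ.continuous_deriv le_rfl
  have hbound : Continuous fun t => √(max (φ t - E) 0) * ‖deriv γ t‖ := by fun_prop
  refine (hbound.intervalIntegrable 0 1).mono_fun' ?_ ?_ <;> rw [uIoc_of_le zero_le_one]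
  · exact (((hWγ.sub_const E).max aemeasurable_const).sqrt.mul
      hγ'.norm.aemeasurable).aestronglyMeasurable
  · refine ae_restrict_of_forall_mem measurableSet_Ioc fun t ht => ?_
    dsimp only
    rw [norm_mul, norm_norm, Real.norm_of_nonneg (Real.sqrt_nonneg _)]
    gcongr
    exact hle t (Ioc_subset_Icc_self ht)

theorem ContDiff.intervalIntegrable_agmonIntegrand_radial {ι : Type*} [Fintype ι]
    {W φ : EuclideanSpace ℝ (Fin n) → ℝ} {V : ι → ℝ → ℝ} {R : ι → EuclideanSpace ℝ (Fin n)}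
    (hγ : ContDiff ℝ 1 γ) (hW : ∀ x, W x = ∑ j, V j ‖x - R j‖ + φ x) (hφ : Continuous φ)
    (hV : ∀ j, MonotoneOn (V j) (Ioi 0)) (hV0 : ∀ j, ∀ s, 0 < s → V j s ≤ 0)
    (havoid : ∀ t ∈ Icc (0:ℝ) 1, ∀ j, γ t ≠ R j) :
    IntervalIntegrable (fun t => √(max (W (γ t) - E) 0) * ‖deriv γ t‖) volume 0 1 := by
  have hpos : ∀ t ∈ Icc (0:ℝ) 1, ∀ j, 0 < ‖γ t - R j‖ := fun t ht j =>
    norm_pos_iff.2 (sub_ne_zero.2 (havoid t ht j))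
  refine hγ.intervalIntegrable_agmonIntegrand (φ := fun t => φ (γ t)) (hφ.comp hγ.continuous)
    ?_ fun t ht => ?_
  · simp only [hW]
    exact (aemeasurable_sum_comp_norm_sub hV hγ.continuous measurableSet_Ioc fun t ht =>
      hpos t (Ioc_subset_Icc_self ht)).add (hφ.comp hγ.continuous).aemeasurable
  · have : ∑ j, V j ‖γ t - R j‖ ≤ 0 := Finset.sum_nonpos fun j _ => hV0 j _ (hpos t ht j)
    rw [hW]
    linarith

end AgmonLength

theorem agmonLength_truncation_bound_general
    (n K : ℕ) (m E F : ℝ)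
    (R : Fin (K + 1) → EuclideanSpace ℝ (Fin (n + 2)))
    (𝒱 : Fin (K + 1) → ℝ → ℝ)
    (h𝒱neg : ∀ j, ∀ s : ℝ, 0 < s → 𝒱 j s < 0)
    (h𝒱mono : ∀ j, StrictMonoOn (𝒱 j) (Set.Ioi 0))
    (Δ : Fin (K + 1) → ℝ) (hΔ : ∀ j, 0 < Δ j)
    (Vsh : Fin (K + 1) → ℝ → ℝ)
    (hVsh : ∀ j, ∀ s : ℝ, Vsh j s = if s < Δ j then 𝒱 j s else 0)
    (U Ush : EuclideanSpace ℝ (Fin (n + 2)) → ℝ)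
    (hU : ∀ x, U x = (∑ j, 𝒱 j ‖x - R j‖) + F * x (Fin.last (n + 1)))
    (hUsh : ∀ x, Ush x = (∑ j, Vsh j ‖x - R j‖) + F * x (Fin.last (n + 1)))
    (lam : ℝ) (hlam : lam = ⨆ j : Fin (K + 1), |𝒱 j (Δ j)|)
    (γ : ℝ → EuclideanSpace ℝ (Fin (n + 2))) (hγ : ContDiff ℝ 1 γ)
    (hγavoid : ∀ t ∈ Set.Icc (0 : ℝ) 1, ∀ j, γ t ≠ R j) :
    |agmonLength m E U γ - agmonLength m E Ush γ| ≤
      Real.sqrt (2 * m * (K + 1 : ℝ) * lam) * ∫ t in (0:ℝ)..1, ‖deriv γ t‖ := by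
  have hVsh_eq j : Vsh j = truncate (𝒱 j) (Δ j) := funext (hVsh j)
  have hmono j : MonotoneOn (𝒱 j) (Ioi 0) := (h𝒱mono j).monotoneOn
  have hnonpos j s (hs : 0 < s) : 𝒱 j s ≤ 0 := (h𝒱neg j s hs).le
  have hφ : Continuous fun x : EuclideanSpace ℝ (Fin (n + 2)) => F * x (Fin.last (n + 1)) := by
    fun_prop
  have hdiff : ∀ t ∈ Icc (0:ℝ) 1, |U (γ t) - Ush (γ t)| ≤ (K + 1 : ℝ) * lam := fun t ht => by
    rw [hU, hUsh, add_sub_add_right_eq_sub]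
    simp only [hVsh_eq]
    simpa using abs_sum_sub_sum_truncate_le hmono hnonpos hΔ
      (fun j => norm_pos_iff.2 (sub_ne_zero.2 (hγavoid t ht j)))
      (fun j => hlam ▸ le_ciSup (f := fun j => |𝒱 j (Δ j)|) (Finite.bddAbove (finite_range _)) j)
  rw [mul_assoc (2 * m)]
  refine abs_agmonLength_sub_le (hγ.intervalIntegrable_agmonIntegrand_radial hU hφ hmono hnonpos
    hγavoid) (hγ.intervalIntegrable_agmonIntegrand_radial hUsh hφ ?_ ?_ hγavoid)
    ((hγ.continuous_deriv le_rfl).norm.intervalIntegrable 0 1) hdiff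
  · exact fun j => hVsh_eq j ▸ monotoneOn_truncate (hmono j) (hnonpos j)
  · exact fun j s hs => hVsh_eq j ▸ truncate_nonpos (hnonpos j) hs

/-- quantitative core of Theorem 2 of the paper.  Long-range setup in
`ℝ^{n+2}` with `K+1` centres `R j`, attractive singular long-range potentials `𝒱 j`
(negative, strictly increasing on `(0,∞)`, `→ −∞` at `0⁺`, `→ 0` at `∞`), cut-off radii
`Δ j > 0`, truncations `V_sh^{(j)}`, full potential `U`, truncated potential `U_sh`, and
`λ = max_j |𝒱_j(Δ_j)|`.  For every `C¹` path `γ` whose image (on `[0,1]`) avoids the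
centres, `|L_A^U(γ) − L_A^{U_sh}(γ)| ≤ √(2 m K λ) ∫₀¹ ‖γ'(t)‖ dt`. -/
theorem agmonLength_truncation_bound
    (n K : ℕ) (m E F : ℝ) (hm : 0 < m) (hF : 0 < F)
    (R : Fin (K + 1) → EuclideanSpace ℝ (Fin (n + 2)))
    (𝒱 : Fin (K + 1) → ℝ → ℝ)
    (h𝒱neg : ∀ j, ∀ s : ℝ, 0 < s → 𝒱 j s < 0)
    (h𝒱mono : ∀ j, StrictMonoOn (𝒱 j) (Set.Ioi 0))
    (h𝒱sing : ∀ j, Tendsto (𝒱 j) (nhdsWithin 0 (Set.Ioi 0)) atBot)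
    (h𝒱zero : ∀ j, Tendsto (𝒱 j) atTop (nhds 0))
    (Δ : Fin (K + 1) → ℝ) (hΔ : ∀ j, 0 < Δ j)
    (Vsh : Fin (K + 1) → ℝ → ℝ)
    (hVsh : ∀ j, ∀ s : ℝ, Vsh j s = if s < Δ j then 𝒱 j s else 0)
    (U Ush : EuclideanSpace ℝ (Fin (n + 2)) → ℝ)
    (hU : ∀ x, U x = (∑ j, 𝒱 j ‖x - R j‖) + F * x (Fin.last (n + 1)))
    (hUsh : ∀ x, Ush x = (∑ j, Vsh j ‖x - R j‖) + F * x (Fin.last (n + 1)))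
    (lam : ℝ) (hlam : lam = ⨆ j : Fin (K + 1), |𝒱 j (Δ j)|)
    (γ : ℝ → EuclideanSpace ℝ (Fin (n + 2))) (hγ : ContDiff ℝ 1 γ)
    (hγavoid : ∀ t ∈ Set.Icc (0 : ℝ) 1, ∀ j, γ t ≠ R j) :
    |agmonLength m E U γ - agmonLength m E Ush γ| ≤
      Real.sqrt (2 * m * (K + 1 : ℝ) * lam) * ∫ t in (0:ℝ)..1, ‖deriv γ t‖ :=
  agmonLength_truncation_bound_general n K m E F R 𝒱 h𝒱neg h𝒱mono Δ hΔ Vsh hVsh U Ush hU hUsh lam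
    hlam γ hγ hγavoid
end

section
/- In the single-centre setup, let y₁ be the least element of the set of solutions y ∈ (c_n − a, c_n + a), y ≠ c_n, of V(|y − c_n|) + F·y = E, and let S = {x ∈ ℝⁿ : 0 < ‖x−c‖ < a and V(‖x−c‖) + F·x_n = E}. Then every x ∈ S satisfies x_n ≥ y₁, with equality if and only if x = (c_1,…,c_{n−1}, y₁); i.e. the unique point of S with smallest n-th coordinate is the on-axis point p = (Πc, y₁). -/
open Filter

lemma euclid_sum_sq {m : ℕ} (v : EuclideanSpace ℝ (Fin m)) :
    ∑ i, (v i) ^ 2 = ‖v‖ ^ 2 := by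
  rw [EuclideanSpace.norm_eq, Real.sq_sqrt (by positivity)]
  simp [Real.norm_eq_abs, sq_abs]

lemma euclid_abs_le {m : ℕ} (v : EuclideanSpace ℝ (Fin m)) (i : Fin m) :
    |v i| ≤ ‖v‖ := by
  have h := euclid_sum_sq v
  have h1 : (v i) ^ 2 ≤ ‖v‖ ^ 2 := by
    rw [← h]
    exact Finset.single_le_sum (f := fun j => (v j) ^ 2)
      (fun j _ => sq_nonneg _) (Finset.mem_univ i)
  calc |v i| = Real.sqrt ((v i) ^ 2) := (Real.sqrt_sq_eq_abs _).symm
    _ ≤ Real.sqrt (‖v‖ ^ 2) := Real.sqrt_le_sqrt h1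
    _ = ‖v‖ := Real.sqrt_sq (norm_nonneg v)

/-- Single-centre setup in `ℝ^{n+2}`; let `y₁` be the least solution
`y ∈ (cₙ − a, cₙ + a)`, `y ≠ cₙ`, of `V(|y − cₙ|) + F y = E`, and let
`S = {x : 0 < ‖x − c‖ < a, V(‖x−c‖) + F xₙ = E}`.  Then every `x ∈ S` satisfies
`xₙ ≥ y₁`, with equality iff `x = p := (Πc, y₁)`: the unique lowest point of `S` is the
on-axis point `p`. -/
theorem lowest_point_of_inner_turning_surface
    (n : ℕ) (F E a : ℝ) (hF : 0 < F) (hE : E < 0) (ha : 0 < a)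
    (c : EuclideanSpace ℝ (Fin (n + 2)))
    (hhalf : E / F < c (Fin.last (n + 1)) - a)
    (V : ℝ → ℝ)
    (hVcont : ContinuousOn V (Set.Ioo 0 a))
    (hVmono : StrictMonoOn V (Set.Ioo 0 a))
    (hVneg : ∀ s ∈ Set.Ioo 0 a, V s < 0)
    (hVsing : Tendsto V (nhdsWithin 0 (Set.Ioi 0)) atBot)
    (hVedge : Tendsto V (nhdsWithin a (Set.Iio a)) (nhds 0))
    (y₁ : ℝ)
    (hy₁ : IsLeast {y | y ∈ Set.Ioo (c (Fin.last (n + 1)) - a) (c (Fin.last (n + 1)) + a) ∧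
      y ≠ c (Fin.last (n + 1)) ∧ V |y - c (Fin.last (n + 1))| + F * y = E} y₁)
    (S : Set (EuclideanSpace ℝ (Fin (n + 2))))
    (hS : S = {x | ‖x - c‖ ∈ Set.Ioo 0 a ∧ V ‖x - c‖ + F * x (Fin.last (n + 1)) = E}) :
    (∀ x ∈ S, y₁ ≤ x (Fin.last (n + 1))) ∧
    (∀ x ∈ S, x (Fin.last (n + 1)) = y₁ ↔
      x = Function.update c (Fin.last (n + 1)) y₁) := by
  set L := Fin.last (n + 1) with hL
  obtain ⟨⟨hy₁mem, hy₁ne, hy₁eq⟩, hy₁lb⟩ := hy₁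
  have hEF : E < F * (c L - a) := by
    have := (div_lt_iff₀ hF).mp hhalf
    linarith
  -- key estimate
  have key : ∀ x ∈ S, y₁ ≤ c L - ‖x - c‖ ∧ c L - ‖x - c‖ ≤ x L := by
    intro x hx
    rw [hS] at hx
    obtain ⟨⟨hs0, hsa⟩, hxE⟩ := hx
    set s := ‖x - c‖ with hsdef
    have habs : |x L - c L| ≤ s := by
      have := euclid_abs_le (x - c) L
      simpa using this
    have h2 : c L - s ≤ x L := by
      have := (abs_le.mp habs).1
      linarith
    refine ⟨?_, h2⟩
    have hle : V s + F * (c L - s) ≤ E := by nlinarith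
    rcases eq_or_lt_of_le hle with heq | hlt
    · apply hy₁lb
      refine ⟨⟨by simp; linarith, by simp; linarith⟩, by intro h; nlinarith [sub_eq_zero.mpr h], ?_⟩
      have : |c L - s - c L| = s := by rw [abs_of_nonpos (by linarith)]; ring
      rw [this]; exact heq
    · -- find a solution below c L - s via IVT
      have hcont : ContinuousOn (fun u => V u + F * (c L - u)) (Set.Ioo 0 a) :=
        hVcont.add ((continuous_const.mul (continuous_const.sub continuous_id)).continuousOn)
      have htend : Tendsto (fun u => V u + F * (c L - u)) (nhdsWithin a (Set.Iio a))
          (nhds (0 + F * (c L - a))) := by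
        apply hVedge.add
        apply Tendsto.mono_left _ nhdsWithin_le_nhds
        exact (continuous_const.mul (continuous_const.sub continuous_id)).continuousAt
      have hev : ∀ᶠ u in nhdsWithin a (Set.Iio a), E < V u + F * (c L - u) :=
        htend.eventually (eventually_gt_nhds (by linarith))
      have hmem : Set.Ioo s a ∈ nhdsWithin a (Set.Iio a) := Ioo_mem_nhdsLT_of_mem ⟨hsa, le_refl a⟩
      obtain ⟨u₀, hu₀E, hu₀s, hu₀a⟩ :
          ∃ u₀, E < V u₀ + F * (c L - u₀) ∧ s < u₀ ∧ u₀ < a := by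
        have := (hev.and (Filter.eventually_of_mem hmem (fun u hu => hu))).exists
        obtain ⟨u₀, h1, h2, h3⟩ := this
        exact ⟨u₀, h1, h2, h3⟩
      have hsub : Set.Icc s u₀ ⊆ Set.Ioo 0 a := fun u hu =>
        ⟨lt_of_lt_of_le hs0 hu.1, lt_of_le_of_lt hu.2 hu₀a⟩
      have hIVT := intermediate_value_Ioo (le_of_lt hu₀s) (hcont.mono hsub)
      have hEmem : E ∈ Set.Ioo (V s + F * (c L - s)) (V u₀ + F * (c L - u₀)) := ⟨hlt, hu₀E⟩
      obtain ⟨u', hu'mem, hu'E⟩ := hIVT hEmem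
      have hu'0 : 0 < u' := lt_trans hs0 hu'mem.1
      have hu'a : u' < a := lt_trans hu'mem.2 hu₀a
      have hsol : y₁ ≤ c L - u' := by
        apply hy₁lb
        refine ⟨⟨by simp; linarith, by simp; linarith⟩, by intro h; nlinarith [sub_eq_zero.mpr h], ?_⟩
        have : |c L - u' - c L| = u' := by rw [abs_of_nonpos (by linarith)]; ring
        rw [this]
        simpa using hu'E
      linarith [hu'mem.1]
  constructor
  · intro x hx
    obtain ⟨h1, h2⟩ := key x hx
    linarith
  · intro x hx
    constructor
    · intro hxy
      obtain ⟨h1, h2⟩ := key x hx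
      rw [hxy] at h2
      have heqs : c L - ‖x - c‖ = y₁ := le_antisymm h2 h1
      rw [hS] at hx
      obtain ⟨⟨hs0, hsa⟩, hxE⟩ := hx
      -- x L - c L = -‖x - c‖, so |x L - c L| = ‖x - c‖
      have hcoord : (x - c) L = -(‖x - c‖) := by
        have : x L - c L = -(‖x - c‖) := by linarith [heqs, hxy]
        simpa using this
      have hsum := euclid_sum_sq (x - c)
      have hlast : ((x - c) L) ^ 2 = ‖x - c‖ ^ 2 := by rw [hcoord]; ring
      have hrest : ∑ i ∈ Finset.univ.erase L, ((x - c) i) ^ 2 = 0 := by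
        have hsplit : ((x - c) L) ^ 2 + ∑ i ∈ Finset.univ.erase L, ((x - c) i) ^ 2
            = ∑ i, ((x - c) i) ^ 2 :=
          Finset.add_sum_erase Finset.univ (fun i => ((x - c) i) ^ 2) (Finset.mem_univ L)
        linarith
      have hzero : ∀ i ∈ Finset.univ.erase L, ((x - c) i) ^ 2 = 0 :=
        (Finset.sum_eq_zero_iff_of_nonneg (fun i _ => sq_nonneg _)).mp hrest
      funext i
      by_cases hi : i = L
      · rw [hi, Function.update_self]
        exact hxy
      · rw [Function.update_of_ne hi]
        have := hzero i (Finset.mem_erase.mpr ⟨hi, Finset.mem_univ i⟩)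
        have h0 : (x - c) i = 0 := by
          exact pow_eq_zero_iff (n := 2) (by norm_num) |>.mp this
        have : x i - c i = 0 := by simpa using h0
        linarith
    · intro hxp
      rw [hxp]
      simp
end

section
/- Two-well model in the plane: let F>0, E<0, m=1, R > 2r > 0, θ ∈ [0, π/2], and let D₁, D₂ ⊂ ℝ² be the closed disks of radius r centred at c₁ = (−(R/2)·sin θ, (R/2)·(1 − cos θ)) and c₂ = ((R/2)·sin θ, (R/2)·(1 + cos θ)), and assume (R/2)·(1 − cos θ) − r > E/F (so both disks lie strictly above the line x₂ = E/F). Define the Agmon length of a C¹ path γ:[0,1]→ℝ² by L_A(γ) = √2·∫₀¹ (max(F·γ₂(t) − E, 0))^{1/2}·𝟙[γ(t) ∉ D₁∪D₂]·‖γ'(t)‖ dt (the integrand vanishes inside the wells, where the potential is −∞). Then the Agmon distance from ∂D₁ ∪ ∂D₂ to the line S_E^+ = {x ∈ ℝ² : x₂ = E/F}, i.e. the infimum of L_A over C¹ paths from ∂D₁ ∪ ∂D₂ to S_E^+, equals (1/(3F))·(F·R·(1 − cos θ) − 2Fr − 2E)^{3/2}; in the limit r → 0 this yields the tunnelling-rate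 exponent Γ ∝ exp{−(2/(3F))·[F·R·(1 − cos θ) − 2E]^{3/2}} of Eq. (33). -/
/-!
Below the wells the potential depends only on the height `y = x₂`, and
`G y = 2/(3F) (F y - E)^{3/2}` is a primitive of `√(max (F y - E) 0)`. Every admissible path
starts at height `≥ h₀ := (R/2)(1 - cos θ) - r`, the lowest point of `D₁ ∪ D₂`, and ends at
height `E/F`. After the last time it is at height `h₀` it stays outside the wells, and there the
Agmon density dominates `-(G ∘ γ₂)'`, so the Agmon length is at least `√2 (G h₀ - G (E/F))`.
The vertical segment from the bottom of `D₁` down to the line `x₂ = E/F` attains this value.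
-/

open MeasureTheory Real Classical Set intervalIntegral

lemma hasDerivAt_rpow_three_halves (x : ℝ) :
    HasDerivAt (fun x : ℝ => x ^ (3 / 2 : ℝ)) (3 / 2 * √x) x := by
  convert hasDerivAt_rpow_const (x := x) (p := 3 / 2) (Or.inr (by norm_num)) using 2
  rw [sqrt_eq_rpow]
  norm_num

lemma sqrt_max_zero (x : ℝ) : √(max x 0) = √x := by
  rcases le_total x 0 with hx | hx
  · rw [max_eq_right hx, sqrt_zero, sqrt_eq_zero'.2 hx]
  · rw [max_eq_left hx]

/-- For `F y < E` the real power below is Mathlib's junk value `0` (like `√` of a negative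
number), so this is a primitive of `y ↦ √(max (F y - E) 0)` on all of `ℝ`. -/
noncomputable def agmonPrimitive (F E y : ℝ) : ℝ := 2 / (3 * F) * (F * y - E) ^ (3 / 2 : ℝ)

lemma hasDerivAt_agmonPrimitive {F : ℝ} (hF : F ≠ 0) (E y : ℝ) :
    HasDerivAt (agmonPrimitive F E) (√(max (F * y - E) 0)) y := by
  have hlin : HasDerivAt (fun y => F * y - E) F y := by
    simpa using ((hasDerivAt_id y).const_mul F).sub_const E
  refine (((hasDerivAt_rpow_three_halves _).comp y hlin).const_mul (2 / (3 * F))).congr_deriv ?_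
  rw [sqrt_max_zero]
  field_simp

lemma agmonPrimitive_div_self {F : ℝ} (hF : F ≠ 0) (E : ℝ) : agmonPrimitive F E (E / F) = 0 := by
  simp [agmonPrimitive, mul_div_cancel₀ E hF]

lemma agmonPrimitive_monotoneOn {F : ℝ} (hF : 0 < F) (E : ℝ) :
    MonotoneOn (agmonPrimitive F E) (Ici (E / F)) := by
  intro a ha b _ hab
  have ha' : 0 ≤ F * a - E := by
    have := (div_le_iff₀ hF).1 (mem_Ici.1 ha)
    linarith
  unfold agmonPrimitive
  gcongr

lemma integral_sqrt_mul_deriv_eq_agmonPrimitive_sub {F : ℝ} (hF : F ≠ 0) {E : ℝ}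
    {ψ ψ' : ℝ → ℝ} (hψ : ∀ t, HasDerivAt ψ (ψ' t) t) (hψ' : Continuous ψ') (a b : ℝ) :
    ∫ t in a..b, √(max (F * ψ t - E) 0) * ψ' t =
      agmonPrimitive F E (ψ b) - agmonPrimitive F E (ψ a) :=
  integral_deriv_comp_mul_deriv (g' := fun y => √(max (F * y - E) 0)) (fun t _ => hψ t)
    (fun t _ => hasDerivAt_agmonPrimitive hF E _) hψ'.continuousOn (by fun_prop)

lemma sqrt_two_mul_agmonPrimitive {F E h : ℝ} (hEh : E ≤ F * h) :
    √2 * agmonPrimitive F E h = 1 / (3 * F) * (2 * (F * h - E)) ^ (3 / 2 : ℝ) := by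
  have h2 : (2 : ℝ) ^ (3 / 2 : ℝ) = 2 * √2 := by
    rw [sqrt_eq_rpow, show (3 / 2 : ℝ) = 1 + 1 / 2 by norm_num, rpow_add two_pos, rpow_one]
  rw [agmonPrimitive, mul_rpow zero_le_two (by linarith), h2]
  ring

lemma closedBall_subset_apply_ge {ι : Type*} [Fintype ι] (c : EuclideanSpace ℝ ι) (r : ℝ)
    (i : ι) : Metric.closedBall c r ⊆ {x | c i - r ≤ x i} := by
  intro x hx
  have hdist := (PiLp.dist_apply_le x c i).trans hx
  rw [Real.dist_eq, abs_le] at hdist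
  show c i - r ≤ x i
  linarith [hdist.1]

lemma exists_last_ge {ψ : ℝ → ℝ} {a b h : ℝ} (hψ : ContinuousOn ψ (Icc a b))
    (ha : h ≤ ψ a) (hb : ψ b < h) (hab : a ≤ b) :
    ∃ τ ∈ Ico a b, h ≤ ψ τ ∧ ∀ t ∈ Ioc τ b, ψ t < h := by
  have hS : IsCompact (Icc a b ∩ ψ ⁻¹' Ici h) := isCompact_Icc.of_isClosed_subset
    (hψ.preimage_isClosed_of_isClosed isClosed_Icc isClosed_Ici) inter_subset_left
  obtain ⟨τ, ⟨hτab, hτ⟩, hmax⟩ := hS.exists_isGreatest ⟨a, ⟨left_mem_Icc.2 hab, ha⟩⟩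
  refine ⟨τ, ⟨hτab.1, lt_of_le_of_ne hτab.2 ?_⟩, hτ, fun t ht => ?_⟩
  · rintro rfl
    exact (not_le.2 hb) hτ
  · by_contra! hle
    exact not_le.2 ht.1 (hmax ⟨⟨hτab.1.trans ht.1.le, ht.2⟩, hle⟩)

section AxisSegment

variable {ι : Type*} [DecidableEq ι] (i : ι) (p : EuclideanSpace ℝ ι) (b : ℝ)

noncomputable def axisSegment (t : ℝ) : EuclideanSpace ℝ ι :=
  p + (t * (b - p i)) • EuclideanSpace.single i 1

@[simp]
lemma axisSegment_apply_self (t : ℝ) : axisSegment i p b t i = p i + t * (b - p i) := by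
  simp [axisSegment]

@[simp]
lemma axisSegment_zero : axisSegment i p b 0 = p := by
  simp [axisSegment]

variable [Fintype ι]

lemma contDiff_axisSegment : ContDiff ℝ 1 (axisSegment i p b) := by
  unfold axisSegment
  fun_prop

lemma hasDerivAt_axisSegment (t : ℝ) :
    HasDerivAt (axisSegment i p b) ((b - p i) • EuclideanSpace.single i 1) t := by
  have := (((hasDerivAt_id t).mul_const (b - p i)).smul_const
    (EuclideanSpace.single i (1 : ℝ))).const_add p
  rwa [one_mul] at this

end AxisSegment

section AgmonDensity

variable {ι : Type*} [Fintype ι] (i : ι)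

noncomputable def agmonDensity (F E : ℝ) (W : Set (EuclideanSpace ℝ ι)) (γ : ℝ → EuclideanSpace ℝ ι)
    (t : ℝ) : ℝ :=
  √(max (F * γ t i - E) 0) * (if γ t ∈ W then 0 else 1) * ‖deriv γ t‖

variable {i} {F E : ℝ} {W : Set (EuclideanSpace ℝ ι)} {γ : ℝ → EuclideanSpace ℝ ι}

lemma agmonDensity_nonneg (t : ℝ) : 0 ≤ agmonDensity i F E W γ t := by
  unfold agmonDensity
  split_ifs <;> positivity

lemma agmonDensity_of_notMem {t : ℝ} (ht : γ t ∉ W) :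
    agmonDensity i F E W γ t = √(max (F * γ t i - E) 0) * ‖deriv γ t‖ := by
  rw [agmonDensity, if_neg ht, mul_one]

lemma intervalIntegrable_agmonDensity (hW : IsClosed W) (hγ : ContDiff ℝ 1 γ) (a b : ℝ) :
    IntervalIntegrable (agmonDensity i F E W γ) volume a b := by
  have hdens : agmonDensity i F E W γ =
      (γ ⁻¹' W)ᶜ.indicator (fun t => √(max (F * γ t i - E) 0) * ‖deriv γ t‖) := by
    ext t
    by_cases ht : γ t ∈ W <;> simp [agmonDensity, ht]
  have hcont : Continuous (fun t => √(max (F * γ t i - E) 0) * ‖deriv γ t‖) := by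
    have := hγ.continuous
    have := hγ.continuous_deriv le_rfl
    fun_prop
  rw [intervalIntegrable_iff, hdens]
  exact (intervalIntegrable_iff.1 (hcont.intervalIntegrable a b)).indicator
    (hW.preimage hγ.continuous).measurableSet.compl

lemma neg_mul_deriv_apply_le_agmonDensity {t : ℝ} (ht : γ t ∉ W) :
    -(√(max (F * γ t i - E) 0) * deriv γ t i) ≤ agmonDensity i F E W γ t := by
  rw [agmonDensity_of_notMem ht, ← mul_neg]
  gcongr
  exact (neg_le_abs _).trans (PiLp.norm_apply_le (deriv γ t) i)

lemma agmonPrimitive_sub_le_integral_agmonDensity (hF : 0 < F) (hW : IsClosed W) {h : ℝ}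
    (hWh : W ⊆ {x | h ≤ x i}) (hEh : E / F ≤ h) (hγ : ContDiff ℝ 1 γ) {a b : ℝ} (hab : a ≤ b)
    (ha : h ≤ γ a i) (hb : γ b i < h) :
    agmonPrimitive F E h - agmonPrimitive F E (γ b i) ≤ ∫ t in a..b, agmonDensity i F E W γ t := by
  have hψ : Continuous fun t => γ t i := by have := hγ.continuous; fun_prop
  have hψ' : Continuous fun t => deriv γ t i := by have := hγ.continuous_deriv le_rfl; fun_prop
  have hψderiv (t : ℝ) : HasDerivAt (fun s => γ s i) (deriv γ t i) t :=
    (PiLp.proj 2 (𝕜 := ℝ) (fun _ : ι => ℝ) i).hasFDerivAt.comp_hasDerivAt t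
      (hγ.differentiable one_ne_zero t).hasDerivAt
  have hint := intervalIntegrable_agmonDensity (i := i) (F := F) (E := E) hW hγ
  obtain ⟨τ, ⟨haτ, hτb⟩, hτ, hafter⟩ := exists_last_ge hψ.continuousOn ha hb hab
  have hFTC : ∫ t in τ..b, -(√(max (F * γ t i - E) 0) * deriv γ t i) =
      agmonPrimitive F E (γ τ i) - agmonPrimitive F E (γ b i) := by
    rw [intervalIntegral.integral_neg,
      integral_sqrt_mul_deriv_eq_agmonPrimitive_sub hF.ne' hψderiv hψ', neg_sub]
  calc agmonPrimitive F E h - agmonPrimitive F E (γ b i)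
      ≤ agmonPrimitive F E (γ τ i) - agmonPrimitive F E (γ b i) := by
        gcongr
        exact agmonPrimitive_monotoneOn hF E hEh (hEh.trans hτ) hτ
    _ = ∫ t in τ..b, -(√(max (F * γ t i - E) 0) * deriv γ t i) := hFTC.symm
    _ ≤ ∫ t in τ..b, agmonDensity i F E W γ t := by
        refine integral_mono_on_of_le_Ioo hτb.le
          (Continuous.intervalIntegrable (by fun_prop) τ b) (hint τ b) fun t ht => ?_
        exact neg_mul_deriv_apply_le_agmonDensity fun htW =>
          (hafter t (Ioo_subset_Ioc_self ht)).not_ge (hWh htW)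
    _ ≤ (∫ t in a..τ, agmonDensity i F E W γ t) + ∫ t in τ..b, agmonDensity i F E W γ t :=
        le_add_of_nonneg_left (integral_nonneg haτ fun t _ => agmonDensity_nonneg t)
    _ = ∫ t in a..b, agmonDensity i F E W γ t :=
        integral_add_adjacent_intervals (hint a τ) (hint τ b)

lemma integral_agmonDensity_axisSegment [DecidableEq ι] {p : EuclideanSpace ℝ ι} {b : ℝ}
    (hF : F ≠ 0) (hb : b < p i) (hWp : W ⊆ {x | p i ≤ x i}) :
    ∫ t in (0 : ℝ)..1, agmonDensity i F E W (axisSegment i p b) t =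
      agmonPrimitive F E (p i) - agmonPrimitive F E b := by
  have hψ (t : ℝ) : HasDerivAt (fun s => axisSegment i p b s i) (b - p i) t := by
    simpa using ((hasDerivAt_id t).mul_const (b - p i)).const_add (p i)
  calc ∫ t in (0 : ℝ)..1, agmonDensity i F E W (axisSegment i p b) t
      = ∫ t in (0 : ℝ)..1, -(√(max (F * axisSegment i p b t i - E) 0) * (b - p i)) := by
        refine integral_congr_ae (ae_of_all _ fun t ht => ?_)
        rw [uIoc_of_le zero_le_one] at ht
        have hbelow : axisSegment i p b t i < p i := by
          rw [axisSegment_apply_self]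
          nlinarith [ht.1]
        rw [agmonDensity_of_notMem fun htW => hbelow.not_ge (hWp htW),
          (hasDerivAt_axisSegment i p b t).deriv, norm_smul, PiLp.norm_single, norm_one,
          mul_one, Real.norm_eq_abs, abs_of_neg (sub_neg.2 hb)]
        ring
    _ = agmonPrimitive F E (p i) - agmonPrimitive F E b := by
        rw [intervalIntegral.integral_neg,
          integral_sqrt_mul_deriv_eq_agmonPrimitive_sub hF hψ continuous_const]
        simp

end AgmonDensity

theorem two_well_agmon_distance_general
    (F E R r θ : ℝ) (hF : 0 < F) (hr : 0 < r) (hRr : 2 * r < R)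
    (hθ : θ ∈ Set.Icc (0 : ℝ) (π / 2))
    (c₁ c₂ : EuclideanSpace ℝ (Fin 2))
    (hc₁1 : c₁ 1 = (R / 2) * (1 - Real.cos θ))
    (hc₂1 : c₂ 1 = (R / 2) * (1 + Real.cos θ))
    (habove : E / F < (R / 2) * (1 - Real.cos θ) - r)
    (D₁ D₂ : Set (EuclideanSpace ℝ (Fin 2)))
    (hD₁ : D₁ = Metric.closedBall c₁ r) (hD₂ : D₂ = Metric.closedBall c₂ r)
    (LA : (ℝ → EuclideanSpace ℝ (Fin 2)) → ℝ)
    (hLA : ∀ γ : ℝ → EuclideanSpace ℝ (Fin 2),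
      LA γ = Real.sqrt 2 * ∫ t in (0:ℝ)..1,
        Real.sqrt (max (F * γ t 1 - E) 0) *
          (if γ t ∈ D₁ ∪ D₂ then 0 else 1) * ‖deriv γ t‖) :
    sInf {L : ℝ | ∃ γ : ℝ → EuclideanSpace ℝ (Fin 2),
        ContDiff ℝ 1 γ ∧
        γ 0 ∈ Metric.sphere c₁ r ∪ Metric.sphere c₂ r ∧
        γ 1 ∈ {x : EuclideanSpace ℝ (Fin 2) | x 1 = E / F} ∧
        L = LA γ} =
      (1 / (3 * F)) * (F * R * (1 - Real.cos θ) - 2 * F * r - 2 * E) ^ ((3 : ℝ) / 2) := by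
  subst hD₁ hD₂
  set W := Metric.closedBall c₁ r ∪ Metric.closedBall c₂ r
  set h₀ := R / 2 * (1 - cos θ) - r with hh₀
  have hLA' (γ : ℝ → EuclideanSpace ℝ (Fin 2)) :
      LA γ = √2 * ∫ t in (0 : ℝ)..1, agmonDensity 1 F E W γ t := by
    -- the two `if`s differ only in their `Decidable` instances
    rw [hLA]
    unfold agmonDensity
    congr with t
    congr
  have hW : W ⊆ {x | h₀ ≤ x 1} := by
    have : 0 ≤ R / 2 * cos θ :=
      mul_nonneg (by linarith) (cos_nonneg_of_mem_Icc ⟨by linarith [hθ.1, pi_pos], hθ.2⟩)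
    refine union_subset ((closedBall_subset_apply_ge c₁ r 1).trans fun x hx => ?_)
      ((closedBall_subset_apply_ge c₂ r 1).trans fun x hx => ?_) <;>
    · change _ ≤ x 1 at hx
      change h₀ ≤ x 1
      linarith
  rw [show F * R * (1 - cos θ) - 2 * F * r - 2 * E = 2 * (F * h₀ - E) by ring,
    ← sqrt_two_mul_agmonPrimitive (by linarith [(div_lt_iff₀' hF).1 habove])]
  refine IsLeast.csInf_eq ⟨?_, ?_⟩
  · set p := c₁ - r • EuclideanSpace.single 1 1
    have hp : p 1 = h₀ := by simp [p, hc₁1, h₀]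
    refine ⟨axisSegment 1 p (E / F), contDiff_axisSegment 1 p (E / F), Or.inl ?_, ?_, ?_⟩
    · simp [p, norm_smul, abs_of_pos hr]
    · simp
    · rw [hLA', integral_agmonDensity_axisSegment hF.ne' (hp ▸ habove) (hp ▸ hW), hp,
        agmonPrimitive_div_self hF.ne', sub_zero]
  · rintro L ⟨γ, hγ, hγ0, hγ1, rfl⟩
    have hstart : γ 0 ∈ W :=
      union_subset_union Metric.sphere_subset_closedBall Metric.sphere_subset_closedBall hγ0
    have hend : γ 1 1 = E / F := hγ1
    have := agmonPrimitive_sub_le_integral_agmonDensity hF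
      (Metric.isClosed_closedBall.union Metric.isClosed_closedBall) hW habove.le hγ
      zero_le_one (hW hstart) (hend ▸ habove)
    rw [hend, agmonPrimitive_div_self hF.ne', sub_zero] at this
    rw [hLA']
    gcongr

/-- Eqs. (32)–(33) of the paper.  Two-well model in the plane:
two infinitely-deep disks `D₁, D₂` of radius `r` centred at
`c₁ = (−(R/2) sin θ, (R/2)(1 − cos θ))` and `c₂ = ((R/2) sin θ, (R/2)(1 + cos θ))`,
`R > 2r > 0`, `θ ∈ [0, π/2]`, field `F > 0`, energy `E < 0`, `m = 1`, both disks
strictly above the line `x₂ = E/F`.  The Agmon length of a `C¹` path is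
`L_A(γ) = √2 ∫₀¹ (max (F γ₂(t) − E) 0)^{1/2} 𝟙[γ(t) ∉ D₁ ∪ D₂] ‖γ'(t)‖ dt`.
Then the Agmon distance from `∂D₁ ∪ ∂D₂` to the line `S_E^+ = {x₂ = E/F}` equals
`(1/(3F)) (F R (1 − cos θ) − 2 F r − 2 E)^{3/2}`. -/
theorem two_well_agmon_distance
    (F E R r θ : ℝ) (hF : 0 < F) (hE : E < 0) (hr : 0 < r) (hRr : 2 * r < R)
    (hθ : θ ∈ Set.Icc (0 : ℝ) (π / 2))
    (c₁ c₂ : EuclideanSpace ℝ (Fin 2))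
    (hc₁0 : c₁ 0 = -(R / 2) * Real.sin θ) (hc₁1 : c₁ 1 = (R / 2) * (1 - Real.cos θ))
    (hc₂0 : c₂ 0 = (R / 2) * Real.sin θ) (hc₂1 : c₂ 1 = (R / 2) * (1 + Real.cos θ))
    (habove : E / F < (R / 2) * (1 - Real.cos θ) - r)
    (D₁ D₂ : Set (EuclideanSpace ℝ (Fin 2)))
    (hD₁ : D₁ = Metric.closedBall c₁ r) (hD₂ : D₂ = Metric.closedBall c₂ r)
    (LA : (ℝ → EuclideanSpace ℝ (Fin 2)) → ℝ)
    (hLA : ∀ γ : ℝ → EuclideanSpace ℝ (Fin 2),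
      LA γ = Real.sqrt 2 * ∫ t in (0:ℝ)..1,
        Real.sqrt (max (F * γ t 1 - E) 0) *
          (if γ t ∈ D₁ ∪ D₂ then 0 else 1) * ‖deriv γ t‖) :
    sInf {L : ℝ | ∃ γ : ℝ → EuclideanSpace ℝ (Fin 2),
        ContDiff ℝ 1 γ ∧
        γ 0 ∈ Metric.sphere c₁ r ∪ Metric.sphere c₂ r ∧
        γ 1 ∈ {x : EuclideanSpace ℝ (Fin 2) | x 1 = E / F} ∧
        L = LA γ} =
      (1 / (3 * F)) * (F * R * (1 - Real.cos θ) - 2 * F * r - 2 * E) ^ ((3 : ℝ) / 2) :=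
  two_well_agmon_distance_general F E R r θ hF hr hRr hθ c₁ c₂ hc₁1 hc₂1 habove D₁ D₂ hD₁ hD₂ LA hLA
end

section
/- Bound on the second-order perturbation-theory transition amplitude: let t_i < t_f, let ψ_in, ψ_fin, (ψ_k)_{k∈ℕ} be measurable functions ℝⁿ → ℂ, E_in, E_fin ∈ ℝ, 0 < ε < 1, c_in, c_fin, (c_k) nonnegative constants, ρ_in, ρ_fin, (ρ_k) measurable real functions with |ψ_in| ≤ c_in·e^{−(1−ε)ρ_in}, |ψ_fin| ≤ c_fin·e^{−(1−ε)ρ_fin}, |ψ_k| ≤ c_k·e^{−(1−ε)ρ_k}, and sup_k c_k < ∞, and let V : ℝⁿ → ℝ be measurable. Suppose the kernel K(x',t'|x,t) satisfies the pointwise bound |K(x',t'|x,t)| ≤ Σ_k |ψ_k(x')|·|ψ_k(x)|, and set B_{fin,k} = ∫|V|·e^{−(1−ε)(ρ_fin+ρ_k)} dx and B_{k,in} = ∫|V|·e^{−(1−ε)(ρ_k+ρ_in)} dx, with Σ_k c_k²·B_{fin,k}·B_{k,in} < ∞ and all relevant integrals existing. Then the amplitude A^{(2)} = −∫_{t_i}^{t_f}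 dt ∫_t^{t_f} dt' ∫∫ conj(ψ_fin(x'))·e^{−iE_fin(t_f−t')}·V(x')·K(x',t'|x,t)·V(x)·ψ_in(x)·e^{−iE_in(t−t_i)} dx dx' satisfies |A^{(2)}| ≤ ((t_f − t_i)²/2)·c_in·c_fin·Σ_k c_k²·B_{fin,k}·B_{k,in}. -/
open MeasureTheory

/-!
Both bound states and the kernel bound are estimated pointwise, and the phases drop out, so the
spatial integrand is dominated by `∑ₖ uₖ(x') vₖ(x)` with
`uₖ = c_fin cₖ |V| e^{−(1−ε)(ρ_fin+ρₖ)}` and `vₖ = cₖ c_in |V| e^{−(1−ε)(ρₖ+ρ_in)}`.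
By Tonelli this majorant integrates to `c_in c_fin ∑ₖ cₖ² B_{fin,k} B_{k,in}`; the estimate is
carried out in `ℝ≥0∞`, where the kernel series need not converge. The time integration over the
triangle `t ≤ t' ≤ t_f` then contributes its area `(t_f − t_i)² / 2`.
-/

lemma ofReal_tsum_le_tsum_ofReal {ι : Type*} {f : ι → ℝ} (hf : ∀ k, 0 ≤ f k) :
    ENNReal.ofReal (∑' k, f k) ≤ ∑' k, ENNReal.ofReal (f k) := by
  by_cases h : Summable f
  · rw [ENNReal.ofReal_tsum_of_nonneg hf h]
  · simp [tsum_eq_zero_of_not_summable h]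

lemma ofReal_mul_mul_le_tsum {ι : Type*} {p q κ : ℝ} {s t : ι → ℝ} (hp : 0 ≤ p) (hq : 0 ≤ q)
    (hs : ∀ k, 0 ≤ s k) (ht : ∀ k, 0 ≤ t k) (hκ : κ ≤ ∑' k, s k * t k) :
    ENNReal.ofReal (p * κ * q) ≤ ∑' k, ENNReal.ofReal (p * s k) * ENNReal.ofReal (t k * q) := by
  have hst : 0 ≤ ∑' k, s k * t k := tsum_nonneg fun k => mul_nonneg (hs k) (ht k)
  calc ENNReal.ofReal (p * κ * q)
      ≤ ENNReal.ofReal p * ENNReal.ofReal (∑' k, s k * t k) * ENNReal.ofReal q := by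
        rw [← ENNReal.ofReal_mul hp, ← ENNReal.ofReal_mul (by positivity)]
        gcongr
    _ ≤ ENNReal.ofReal p * (∑' k, ENNReal.ofReal (s k * t k)) * ENNReal.ofReal q := by
        gcongr
        exact ofReal_tsum_le_tsum_ofReal fun k => mul_nonneg (hs k) (ht k)
    _ = ∑' k, ENNReal.ofReal (p * s k) * ENNReal.ofReal (t k * q) := by
        rw [← ENNReal.tsum_mul_left, ← ENNReal.tsum_mul_right]
        refine tsum_congr fun k => ?_
        rw [ENNReal.ofReal_mul hp, ENNReal.ofReal_mul (hs k), ENNReal.ofReal_mul (ht k)]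
        ring

theorem norm_integral_prod_le_tsum_integral_mul {ι X Y E : Type*} [Countable ι]
    [MeasurableSpace X] [MeasurableSpace Y] [NormedAddCommGroup E] [NormedSpace ℝ E]
    {μ : Measure X} {ν : Measure Y} [SFinite ν] {f : X × Y → E} {u : ι → X → ℝ} {v : ι → Y → ℝ}
    (hu0 : ∀ k, 0 ≤ᵐ[μ] u k) (hv0 : ∀ k, 0 ≤ᵐ[ν] v k)
    (hu : ∀ k, Integrable (u k) μ) (hv : ∀ k, Integrable (v k) ν)
    (hsum : Summable fun k => (∫ x, u k x ∂μ) * ∫ y, v k y ∂ν)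
    (hf : ∀ q, ‖f q‖ₑ ≤ ∑' k, ENNReal.ofReal (u k q.1) * ENNReal.ofReal (v k q.2)) :
    ‖∫ q, f q ∂μ.prod ν‖ ≤ ∑' k, (∫ x, u k x ∂μ) * ∫ y, v k y ∂ν := by
  have hterm0 : ∀ k, 0 ≤ (∫ x, u k x ∂μ) * ∫ y, v k y ∂ν := fun k =>
    mul_nonneg (integral_nonneg_of_ae (hu0 k)) (integral_nonneg_of_ae (hv0 k))
  have hterm : ∀ k, ∫⁻ q, ENNReal.ofReal (u k q.1) * ENNReal.ofReal (v k q.2) ∂μ.prod ν =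
      ENNReal.ofReal ((∫ x, u k x ∂μ) * ∫ y, v k y ∂ν) := fun k => by
    rw [lintegral_prod_mul (hu k).aemeasurable.ennreal_ofReal (hv k).aemeasurable.ennreal_ofReal,
      ← ofReal_integral_eq_lintegral_ofReal (hu k) (hu0 k),
      ← ofReal_integral_eq_lintegral_ofReal (hv k) (hv0 k),
      ENNReal.ofReal_mul (integral_nonneg_of_ae (hu0 k))]
  rw [← ENNReal.ofReal_le_ofReal_iff (tsum_nonneg hterm0), ofReal_norm]
  calc ‖∫ q, f q ∂μ.prod ν‖ₑ ≤ ∫⁻ q, ‖f q‖ₑ ∂μ.prod ν := enorm_integral_le_lintegral_enorm f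
    _ ≤ ∫⁻ q, ∑' k, ENNReal.ofReal (u k q.1) * ENNReal.ofReal (v k q.2) ∂μ.prod ν :=
        lintegral_mono hf
    _ = ∑' k, ENNReal.ofReal ((∫ x, u k x ∂μ) * ∫ y, v k y ∂ν) := by
        refine (lintegral_tsum fun k => ?_).trans (tsum_congr hterm)
        exact (hu k).aemeasurable.ennreal_ofReal.comp_fst.mul
          (hv k).aemeasurable.ennreal_ofReal.comp_snd
    _ = ENNReal.ofReal (∑' k, (∫ x, u k x ∂μ) * ∫ y, v k y ∂ν) :=
        (ENNReal.ofReal_tsum_of_nonneg hterm0 hsum).symm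

theorem norm_integral_integral_le_of_norm_le {E : Type*} [NormedAddCommGroup E]
    [NormedSpace ℝ E] {f : ℝ → ℝ → E} {M : ℝ} (hf : ∀ t t', ‖f t t'‖ ≤ M) (a b : ℝ) :
    ‖∫ t in a..b, ∫ t' in t..b, f t t'‖ ≤ M * (b - a) ^ 2 / 2 := by
  have hinner : ∀ t, ‖∫ t' in t..b, f t t'‖ ≤ M * |b - t| := fun t =>
    intervalIntegral.norm_integral_le_of_norm_le_const fun t' _ => hf t t'
  rcases le_total a b with hab | hba
  · calc ‖∫ t in a..b, ∫ t' in t..b, f t t'‖ ≤ ∫ t in a..b, M * (b - t) := by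
          refine intervalIntegral.norm_integral_le_of_norm_le hab (ae_of_all _ fun t ht => ?_)
            (Continuous.intervalIntegrable (by fun_prop) _ _)
          rw [← abs_of_nonneg (sub_nonneg.2 ht.2)]
          exact hinner t
      _ = M * (b - a) ^ 2 / 2 := by
          simp only [intervalIntegral.integral_const_mul,
            intervalIntegral.integral_comp_sub_left (fun x => x) b, integral_id]
          ring
  · calc ‖∫ t in a..b, ∫ t' in t..b, f t t'‖ ≤ ∫ t in b..a, M * (t - b) := by
          rw [intervalIntegral.integral_symm, norm_neg]
          refine intervalIntegral.norm_integral_le_of_norm_le hba (ae_of_all _ fun t ht => ?_)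
            (Continuous.intervalIntegrable (by fun_prop) _ _)
          rw [← abs_of_nonneg (sub_nonneg.2 ht.1.le), abs_sub_comm]
          exact hinner t
      _ = M * (b - a) ^ 2 / 2 := by
          simp only [intervalIntegral.integral_const_mul,
            intervalIntegral.integral_comp_sub_right (fun x => x) b, integral_id]
          ring

lemma norm_mul_abs_mul_norm_le_of_agmon {X : Type*} {φ χ : X → ℂ} {W ρφ ρχ : X → ℝ}
    {cφ cχ a : ℝ} (hφ : ∀ x, ‖φ x‖ ≤ cφ * Real.exp (-a * ρφ x))
    (hχ : ∀ x, ‖χ x‖ ≤ cχ * Real.exp (-a * ρχ x)) (x : X) :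
    ‖φ x‖ * |W x| * ‖χ x‖ ≤ cφ * cχ * (|W x| * Real.exp (-a * (ρφ x + ρχ x))) :=
  calc ‖φ x‖ * |W x| * ‖χ x‖
      ≤ cφ * Real.exp (-a * ρφ x) * |W x| * (cχ * Real.exp (-a * ρχ x)) := by
        gcongr
        · exact mul_nonneg ((norm_nonneg _).trans (hφ x)) (abs_nonneg _)
        · exact hφ x
        · exact hχ x
    _ = cφ * cχ * (|W x| * Real.exp (-a * (ρφ x + ρχ x))) := by
        rw [mul_add, Real.exp_add]
        ring

lemma norm_exp_neg_I_mul_ofReal_mul (E s : ℝ) : ‖Complex.exp (-Complex.I * E * s)‖ = 1 := by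
  simp [Complex.norm_exp]

lemma enorm_amplitude_integrand_le {X : Type*} {ψin ψfin : X → ℂ} {ψ : ℕ → X → ℂ}
    {V ρin ρfin : X → ℝ} {ρ : ℕ → X → ℝ} {cin cfin a : ℝ} {c : ℕ → ℝ}
    (hbin : ∀ x, ‖ψin x‖ ≤ cin * Real.exp (-a * ρin x))
    (hbfin : ∀ x, ‖ψfin x‖ ≤ cfin * Real.exp (-a * ρfin x))
    (hbound : ∀ k x, ‖ψ k x‖ ≤ c k * Real.exp (-a * ρ k x)) {x' x : X} {κ z w : ℂ}
    (hκ : ‖κ‖ ≤ ∑' k, ‖ψ k x'‖ * ‖ψ k x‖) (hz : ‖z‖ = 1) (hw : ‖w‖ = 1) :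
    ‖starRingEnd ℂ (ψfin x') * z * V x' * κ * V x * ψin x * w‖ₑ ≤
      ∑' k, ENNReal.ofReal (cfin * c k * (|V x'| * Real.exp (-a * (ρfin x' + ρ k x')))) *
        ENNReal.ofReal (c k * cin * (|V x| * Real.exp (-a * (ρ k x + ρin x)))) := by
  have hnorm : ‖starRingEnd ℂ (ψfin x') * z * V x' * κ * V x * ψin x * w‖ =
      ‖ψfin x'‖ * |V x'| * ‖κ‖ * (|V x| * ‖ψin x‖) := by
    simp only [norm_mul, Complex.norm_conj, Complex.norm_real, Real.norm_eq_abs, hz, hw, mul_one]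
    ring
  rw [← ofReal_norm, hnorm]
  refine (ofReal_mul_mul_le_tsum (by positivity) (by positivity) (fun k => norm_nonneg _)
    (fun k => norm_nonneg _) hκ).trans (ENNReal.tsum_le_tsum fun k => ?_)
  rw [← mul_assoc]
  exact mul_le_mul'
    (ENNReal.ofReal_le_ofReal (norm_mul_abs_mul_norm_le_of_agmon hbfin (hbound k) x'))
    (ENNReal.ofReal_le_ofReal (norm_mul_abs_mul_norm_le_of_agmon (hbound k) hbin x))

theorem second_order_amplitude_bound_general
    (n : ℕ) (ti tf : ℝ)
    (ψin ψfin : EuclideanSpace ℝ (Fin n) → ℂ)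
    (ψ : ℕ → EuclideanSpace ℝ (Fin n) → ℂ)
    (Ein Efin : ℝ) (ε : ℝ)
    (cin cfin : ℝ) (hcin : 0 ≤ cin) (hcfin : 0 ≤ cfin)
    (c : ℕ → ℝ) (hc : ∀ k, 0 ≤ c k)
    (ρin ρfin : EuclideanSpace ℝ (Fin n) → ℝ)
    (ρ : ℕ → EuclideanSpace ℝ (Fin n) → ℝ)
    (V : EuclideanSpace ℝ (Fin n) → ℝ)
    (hbin : ∀ x, ‖ψin x‖ ≤ cin * Real.exp (-(1 - ε) * ρin x))
    (hbfin : ∀ x, ‖ψfin x‖ ≤ cfin * Real.exp (-(1 - ε) * ρfin x))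
    (hbound : ∀ k x, ‖ψ k x‖ ≤ c k * Real.exp (-(1 - ε) * ρ k x))
    (K : EuclideanSpace ℝ (Fin n) → ℝ → EuclideanSpace ℝ (Fin n) → ℝ → ℂ)
    (hK : ∀ x' t' x t, ‖K x' t' x t‖ ≤ ∑' k : ℕ, ‖ψ k x'‖ * ‖ψ k x‖)
    (Bfin Bin : ℕ → ℝ)
    (hBfin : ∀ k, Bfin k = ∫ x, |V x| * Real.exp (-(1 - ε) * (ρfin x + ρ k x)))
    (hBin : ∀ k, Bin k = ∫ x, |V x| * Real.exp (-(1 - ε) * (ρ k x + ρin x)))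
    (hBfinInt : ∀ k,
      Integrable (fun x => |V x| * Real.exp (-(1 - ε) * (ρfin x + ρ k x))))
    (hBinInt : ∀ k,
      Integrable (fun x => |V x| * Real.exp (-(1 - ε) * (ρ k x + ρin x))))
    (hsum : Summable (fun k : ℕ => c k ^ 2 * Bfin k * Bin k))
    (A2 : ℂ)
    (hA2 : A2 = -∫ t in ti..tf, ∫ t' in t..tf,
      ∫ q : EuclideanSpace ℝ (Fin n) × EuclideanSpace ℝ (Fin n),
        (starRingEnd ℂ) (ψfin q.1) * Complex.exp (-Complex.I * (Efin : ℂ) * ((tf - t' : ℝ) : ℂ)) *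
          (V q.1 : ℂ) * K q.1 t' q.2 t * (V q.2 : ℂ) * ψin q.2 *
          Complex.exp (-Complex.I * (Ein : ℂ) * ((t - ti : ℝ) : ℂ))) :
    ‖A2‖ ≤ (tf - ti) ^ 2 / 2 * cin * cfin * ∑' k : ℕ, c k ^ 2 * Bfin k * Bin k := by
  set u : ℕ → EuclideanSpace ℝ (Fin n) → ℝ := fun k x =>
    cfin * c k * (|V x| * Real.exp (-(1 - ε) * (ρfin x + ρ k x)))
  set v : ℕ → EuclideanSpace ℝ (Fin n) → ℝ := fun k x =>
    c k * cin * (|V x| * Real.exp (-(1 - ε) * (ρ k x + ρin x)))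
  have hterm : ∀ k, (∫ x, u k x) * ∫ x, v k x = cin * cfin * (c k ^ 2 * Bfin k * Bin k) :=
    fun k => by
      simp only [u, v, integral_const_mul, ← hBfin, ← hBin]
      ring
  rw [hA2, norm_neg]
  refine (norm_integral_integral_le_of_norm_le (M := cin * cfin * ∑' k, c k ^ 2 * Bfin k * Bin k)
    (fun t t' => ?_) ti tf).trans_eq (by ring)
  rw [← tsum_mul_left, ← tsum_congr hterm]
  exact norm_integral_prod_le_tsum_integral_mul
    (fun k => ae_of_all _ fun x => mul_nonneg (mul_nonneg hcfin (hc k)) (by positivity))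
    (fun k => ae_of_all _ fun x => mul_nonneg (mul_nonneg (hc k) hcin) (by positivity))
    (fun k => (hBfinInt k).const_mul _) (fun k => (hBinInt k).const_mul _)
    ((hsum.mul_left _).congr fun k => (hterm k).symm) fun q =>
      enorm_amplitude_integrand_le hbin hbfin hbound (hK _ _ _ _)
        (norm_exp_neg_I_mul_ofReal_mul _ _) (norm_exp_neg_I_mul_ofReal_mul _ _)

/-- Eqs. (A5)–(A7) of the paper: bound on the second-order
time-dependent perturbation-theory transition amplitude.  With Agmon upper bounds
`|ψ_in| ≤ c_in e^{−(1−ε)ρ_in}`, `|ψ_fin| ≤ c_fin e^{−(1−ε)ρ_fin}`,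
`|ψ_k| ≤ c_k e^{−(1−ε)ρ_k}`, `sup_k c_k < ∞`, the kernel bound
`|K(x',t'|x,t)| ≤ Σ_k |ψ_k(x')||ψ_k(x)|`, and
`B_{fin,k} = ∫ |V| e^{−(1−ε)(ρ_fin+ρ_k)}`, `B_{k,in} = ∫ |V| e^{−(1−ε)(ρ_k+ρ_in)}`,
the second-order amplitude `A²` satisfies
`|A²| ≤ ((t_f−t_i)²/2) c_in c_fin Σ_k c_k² B_{fin,k} B_{k,in}`. -/
theorem second_order_amplitude_bound
    (n : ℕ) (ti tf : ℝ) (hti : ti < tf)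
    (ψin ψfin : EuclideanSpace ℝ (Fin n) → ℂ)
    (ψ : ℕ → EuclideanSpace ℝ (Fin n) → ℂ)
    (Ein Efin : ℝ) (ε : ℝ) (hε : 0 < ε) (hε1 : ε < 1)
    (cin cfin : ℝ) (hcin : 0 ≤ cin) (hcfin : 0 ≤ cfin)
    (c : ℕ → ℝ) (hc : ∀ k, 0 ≤ c k) (hcsup : BddAbove (Set.range c))
    (ρin ρfin : EuclideanSpace ℝ (Fin n) → ℝ)
    (ρ : ℕ → EuclideanSpace ℝ (Fin n) → ℝ)
    (hψinm : Measurable ψin) (hψfinm : Measurable ψfin) (hψm : ∀ k, Measurable (ψ k))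
    (hρinm : Measurable ρin) (hρfinm : Measurable ρfin) (hρm : ∀ k, Measurable (ρ k))
    (V : EuclideanSpace ℝ (Fin n) → ℝ) (hVm : Measurable V)
    (hbin : ∀ x, ‖ψin x‖ ≤ cin * Real.exp (-(1 - ε) * ρin x))
    (hbfin : ∀ x, ‖ψfin x‖ ≤ cfin * Real.exp (-(1 - ε) * ρfin x))
    (hbound : ∀ k x, ‖ψ k x‖ ≤ c k * Real.exp (-(1 - ε) * ρ k x))
    (K : EuclideanSpace ℝ (Fin n) → ℝ → EuclideanSpace ℝ (Fin n) → ℝ → ℂ)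
    (hK : ∀ x' t' x t, ‖K x' t' x t‖ ≤ ∑' k : ℕ, ‖ψ k x'‖ * ‖ψ k x‖)
    (Bfin Bin : ℕ → ℝ)
    (hBfin : ∀ k, Bfin k = ∫ x, |V x| * Real.exp (-(1 - ε) * (ρfin x + ρ k x)))
    (hBin : ∀ k, Bin k = ∫ x, |V x| * Real.exp (-(1 - ε) * (ρ k x + ρin x)))
    (hBfinInt : ∀ k,
      Integrable (fun x => |V x| * Real.exp (-(1 - ε) * (ρfin x + ρ k x))))
    (hBinInt : ∀ k,
      Integrable (fun x => |V x| * Real.exp (-(1 - ε) * (ρ k x + ρin x))))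
    (hsum : Summable (fun k : ℕ => c k ^ 2 * Bfin k * Bin k))
    (hKint : ∀ t t' : ℝ, Integrable (fun q : EuclideanSpace ℝ (Fin n) × EuclideanSpace ℝ (Fin n) =>
      (starRingEnd ℂ) (ψfin q.1) * Complex.exp (-Complex.I * (Efin : ℂ) * ((tf - t' : ℝ) : ℂ)) *
        (V q.1 : ℂ) * K q.1 t' q.2 t * (V q.2 : ℂ) * ψin q.2 *
        Complex.exp (-Complex.I * (Ein : ℂ) * ((t - ti : ℝ) : ℂ))))
    (A2 : ℂ)
    (hA2 : A2 = -∫ t in ti..tf, ∫ t' in t..tf,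
      ∫ q : EuclideanSpace ℝ (Fin n) × EuclideanSpace ℝ (Fin n),
        (starRingEnd ℂ) (ψfin q.1) * Complex.exp (-Complex.I * (Efin : ℂ) * ((tf - t' : ℝ) : ℂ)) *
          (V q.1 : ℂ) * K q.1 t' q.2 t * (V q.2 : ℂ) * ψin q.2 *
          Complex.exp (-Complex.I * (Ein : ℂ) * ((t - ti : ℝ) : ℂ))) :
    ‖A2‖ ≤ (tf - ti) ^ 2 / 2 * cin * cfin * ∑' k : ℕ, c k ^ 2 * Bfin k * Bin k :=
  second_order_amplitude_bound_general n ti tf ψin ψfin ψ Ein Efin ε cin cfin hcin hcfin c hc ρin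
    ρfin ρ V hbin hbfin hbound K hK Bfin Bin hBfin hBin hBfinInt hBinInt hsum A2 hA2
end
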